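/- Consider a zero-sum semidefinite network game with payoff operators Φ_{ij} and Φ_i(X) = Σ_{j ∈ N(i)} Φ_{ij}(X_j). Then the minimum of Σ_{i=1}^N λ_max(Φ_i(X)) over all profiles X of density matrices equals 0, and this minimum is attained; equivalently, the semidefinite program minimizing Σ_i w_i over (w, X) with X a profile of density matrices and Φ_i(X) ⪯ w_i I_{n_i} for all i has optimal value 0, attained by some feasible point. -/

import Mathlib

/-!
Weak duality gives the lower bound: for a feasible `(w, X)` we have `⟨Xᵢ, Φᵢ(X)⟩ ≤ wᵢ`, since
the trace of a product of positive semidefinite matrices is nonnegative, while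
`Σᵢ ⟨Xᵢ, Φᵢ(X)⟩ = Σᵢ pᵢ(X) = 0`; the choice `wᵢ = λ_max(Φᵢ(X))` is always feasible.

For attainment, `B(X, W) = Σᵢ ⟨Wᵢ, Φᵢ(X)⟩` is real bilinear and, the game being zero-sum,
vanishes on the diagonal of the compact convex set of density profiles. Sion's minimax theorem
yields a saddle point `(Y, Y')`, so `B(Y, W) ≤ B(Y', Y') = 0` for every density profile `W`.
Taking `Wᵢ` to be the projection onto a top eigenvector of `Φᵢ(Y)` gives `Σᵢ λ_max(Φᵢ(Y)) ≤ 0`.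
-/

open Matrix Kronecker BigOperators ComplexOrder

noncomputable section

/-- Frobenius inner product `⟨A, B⟩ = tr(Aᴴ B)`. -/
def frob {α : Type*} [Fintype α] (A B : Matrix α α ℂ) : ℂ := (Aᴴ * B).trace

/-- A density matrix: positive semidefinite with trace one. -/
def IsDensity {α : Type*} [Fintype α] (X : Matrix α α ℂ) : Prop :=
  X.PosSemidef ∧ X.trace = 1

/-- The payoff operator `Φ_R` associated with a payoff matrix `R`,
defined entrywise by `Φ_R(T)_{a,b} = Σ_{c,d} R_{(a,c),(b,d)} T_{d,c}`. -/
def payoffOp {k m : ℕ} (R : Matrix (Fin k × Fin m) (Fin k × Fin m) ℂ)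
    (T : Matrix (Fin m) (Fin m) ℂ) : Matrix (Fin k) (Fin k) ℂ :=
  Matrix.of fun a b => ∑ c, ∑ d, R (a, c) (b, d) * T d c

/-- The payoff of player `i`: `p_i(X) = Σ_{j ∈ N(i)} ⟨R_{ij}, X_i ⊗ X_j⟩` (a real number). -/
def payoff {N : ℕ} (G : SimpleGraph (Fin N)) [DecidableRel G.Adj] (n : Fin N → ℕ)
    (R : ∀ i j : Fin N, Matrix (Fin (n i) × Fin (n j)) (Fin (n i) × Fin (n j)) ℂ)
    (X : ∀ i, Matrix (Fin (n i)) (Fin (n i)) ℂ) (i : Fin N) : ℝ :=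
  (∑ j ∈ G.neighborFinset i, frob (R i j) ((X i) ⊗ₖ (X j))).re

/-- `Φ_i(X) = Σ_{j ∈ N(i)} Φ_{ij}(X_j)`. -/
def Phi {N : ℕ} (G : SimpleGraph (Fin N)) [DecidableRel G.Adj] (n : Fin N → ℕ)
    (R : ∀ i j : Fin N, Matrix (Fin (n i) × Fin (n j)) (Fin (n i) × Fin (n j)) ℂ)
    (X : ∀ i, Matrix (Fin (n i)) (Fin (n i)) ℂ) (i : Fin N) :
    Matrix (Fin (n i)) (Fin (n i)) ℂ :=
  ∑ j ∈ G.neighborFinset i, payoffOp (R i j) (X j)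

/-- Nash equilibrium (best-response) condition for a strategy profile. -/
def IsNash {N : ℕ} (G : SimpleGraph (Fin N)) [DecidableRel G.Adj] (n : Fin N → ℕ)
    (R : ∀ i j : Fin N, Matrix (Fin (n i) × Fin (n j)) (Fin (n i) × Fin (n j)) ℂ)
    (X : ∀ i, Matrix (Fin (n i)) (Fin (n i)) ℂ) : Prop :=
  ∀ i, ∀ S : Matrix (Fin (n i)) (Fin (n i)) ℂ, IsDensity S →
    payoff G n R (Function.update X i S) i ≤ payoff G n R X i

/-- The largest eigenvalue of a Hermitian matrix (junk value `0` otherwise). -/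
def lamMax {k : ℕ} (A : Matrix (Fin k) (Fin k) ℂ) : ℝ :=
  if h : A.IsHermitian then ⨆ i, h.eigenvalues i else 0

theorem exists_forall_apply_le_zero_of_apply_self_eq_zero {E : Type*} [AddCommGroup E]
    [Module ℝ E] [TopologicalSpace E] [IsTopologicalAddGroup E] [ContinuousSMul ℝ E]
    [T2Space E] [FiniteDimensional ℝ E] {K : Set E} (hK : Convex ℝ K) (hKc : IsCompact K)
    (hKne : K.Nonempty) (B : E →ₗ[ℝ] E →ₗ[ℝ] ℝ) (hB : ∀ x ∈ K, B x x = 0) :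
    ∃ y ∈ K, ∀ x ∈ K, B y x ≤ 0 := by
  obtain ⟨a, ha, b, hb, hab⟩ := Sion.exists_isSaddlePointOn (f := fun x y => B x y) hKne hK hKc
    (fun y _ =>
      (B.flip y).continuous_of_finiteDimensional.lowerSemicontinuous.lowerSemicontinuousOn _)
    (fun y _ => ((B.flip y).convexOn hK).quasiconvexOn) hK hKne hKc
    (fun x _ => (B x).continuous_of_finiteDimensional.upperSemicontinuous.upperSemicontinuousOn _)
    (fun x _ => ((B x).concaveOn hK).quasiconcaveOn)
  exact ⟨a, ha, fun x hx => (hab b hb x hx).trans (hB b hb).le⟩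

namespace Matrix

variable {α 𝕜 : Type*} [RCLike 𝕜]

theorem PosSemidef.norm_apply_sq_le [Fintype α] {M : Matrix α α 𝕜} (hM : M.PosSemidef)
    (a b : α) : ‖M a b‖ ^ 2 ≤ RCLike.re (M a a) * RCLike.re (M b b) := by
  classical
  have h := (hM.submatrix ![a, b]).det_nonneg
  rw [det_fin_two] at h
  obtain ⟨x, -, hx⟩ := RCLike.nonneg_iff_exists_ofReal.mp (hM.diag_nonneg (i := a))
  obtain ⟨y, -, hy⟩ := RCLike.nonneg_iff_exists_ofReal.mp (hM.diag_nonneg (i := b))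
  have hba : M b a = star (M a b) := (hM.isHermitian.apply b a).symm
  simp only [submatrix_apply, Matrix.cons_val_zero, Matrix.cons_val_one, hba, RCLike.star_def,
    RCLike.mul_conj, ← hx, ← hy] at h
  rw [← hx, ← hy, RCLike.ofReal_re, RCLike.ofReal_re]
  exact_mod_cast sub_nonneg.mp h

variable [Fintype α]

open scoped MatrixOrder in
theorem PosSemidef.trace_mul_nonneg {S M : Matrix α α 𝕜} (hS : S.PosSemidef)
    (hM : M.PosSemidef) : 0 ≤ (S * M).trace := by
  classical
  obtain ⟨B, rfl⟩ := CStarAlgebra.nonneg_iff_eq_star_mul_self.mp hS.nonneg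
  rw [star_eq_conjTranspose, Matrix.mul_assoc, trace_mul_comm]
  exact (hM.mul_mul_conjTranspose_same B).trace_nonneg

theorem isClosed_setOf_posSemidef : IsClosed {M : Matrix α α 𝕜 | M.PosSemidef} := by
  have h : {M : Matrix α α 𝕜 | M.PosSemidef} =
      {M | Mᴴ = M} ∩ ⋂ x : α → 𝕜, {M | 0 ≤ star x ⬝ᵥ M *ᵥ x} := by
    ext M
    simp [posSemidef_iff_dotProduct_mulVec, IsHermitian]
  rw [h]
  exact (isClosed_eq continuous_id.matrix_conjTranspose continuous_id).inter
    (isClosed_iInter fun x => isClosed_le continuous_const (by fun_prop))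

end Matrix

section DensityMatrix

variable {α : Type*} [Fintype α]

theorem IsDensity.norm_apply_le_one {M : Matrix α α ℂ} (hM : IsDensity M)
    (a b : α) : ‖M a b‖ ≤ 1 := by
  have hdiag_nonneg : ∀ c, 0 ≤ (M c c).re := fun c => (Complex.le_def.mp hM.1.diag_nonneg).1
  have htrace : ∑ c, (M c c).re = 1 := by
    simpa [trace, Complex.re_sum] using congrArg Complex.re hM.2
  have hdiag_le (c : α) : (M c c).re ≤ 1 :=
    htrace ▸ Finset.single_le_sum (fun d _ => hdiag_nonneg d) (Finset.mem_univ c)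
  have h := hM.1.norm_apply_sq_le a b
  rw [← sq_le_one_iff₀ (norm_nonneg _)]
  exact h.trans (mul_le_one₀ (hdiag_le a) (hdiag_nonneg b) (hdiag_le b))

theorem isCompact_setOf_isDensity : IsCompact {M : Matrix α α ℂ | IsDensity M} := by
  refine (isCompact_univ_pi fun _ => isCompact_univ_pi fun _ =>
    isCompact_closedBall (0 : ℂ) 1).of_isClosed_subset
    (Matrix.isClosed_setOf_posSemidef.inter (isClosed_eq (by fun_prop) continuous_const)) ?_
  intro M hM a _ b _
  simpa using hM.norm_apply_le_one a b

theorem convex_setOf_isDensity : Convex ℝ {M : Matrix α α ℂ | IsDensity M} := by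
  intro X hX Y hY a b ha hb hab
  refine ⟨(hX.1.smul ha).add (hY.1.smul hb), ?_⟩
  rw [trace_add, trace_smul, trace_smul, hX.2, hY.2]
  simp only [Complex.real_smul, mul_one]
  exact_mod_cast hab

theorem isDensity_vecMulVec_star {v : α → ℂ} (hv : star v ⬝ᵥ v = 1) :
    IsDensity (vecMulVec v (star v)) :=
  ⟨posSemidef_vecMulVec_self_star v, by rw [trace_vecMulVec, dotProduct_comm, hv]⟩

theorem exists_isDensity [Nonempty α] : ∃ M : Matrix α α ℂ, IsDensity M := by
  classical
  exact ⟨_, isDensity_vecMulVec_star (v := Pi.single (Classical.arbitrary α) 1) (by simp)⟩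

theorem IsDensity.re_frob_le [DecidableEq α] {S A : Matrix α α ℂ} (hS : IsDensity S) {w : ℝ}
    (hA : ((w : ℂ) • 1 - A).PosSemidef) : (frob S A).re ≤ w := by
  have h := hS.1.trace_mul_nonneg hA
  rw [Matrix.mul_sub, Matrix.mul_smul, Matrix.mul_one, trace_sub, trace_smul, hS.2,
    ← hS.1.isHermitian.eq] at h
  simpa [frob] using (Complex.le_def.mp h).1

end DensityMatrix

namespace Matrix.IsHermitian

variable {k : ℕ} {A : Matrix (Fin k) (Fin k) ℂ}

theorem eigenvalues_le_lamMax (hA : A.IsHermitian) (i : Fin k) :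
    hA.eigenvalues i ≤ lamMax A := by
  rw [lamMax, dif_pos hA]
  exact le_ciSup (Set.finite_range _).bddAbove i

open scoped MatrixOrder in
theorem posSemidef_lamMax_smul_one_sub (hA : A.IsHermitian) :
    ((lamMax A : ℂ) • 1 - A).PosSemidef := by
  have h : A ≤ algebraMap ℝ _ (lamMax A) := by
    refine le_algebraMap_of_spectrum_le ?_ hA.isSelfAdjoint
    rw [hA.spectrum_real_eq_range_eigenvalues]
    rintro _ ⟨i, rfl⟩
    exact hA.eigenvalues_le_lamMax i
  rwa [Algebra.algebraMap_eq_smul_one, ← Complex.coe_smul] at h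

theorem exists_isDensity_re_frob_eq_lamMax (hk : 0 < k) (hA : A.IsHermitian) :
    ∃ S, IsDensity S ∧ (frob S A).re = lamMax A := by
  have : Nonempty (Fin k) := Fin.pos_iff_nonempty.mp hk
  obtain ⟨i, hi⟩ := exists_eq_ciSup_of_finite (f := hA.eigenvalues)
  set v := (hA.eigenvectorBasis i).ofLp
  have hv : star v ⬝ᵥ v = 1 := by
    rw [dotProduct_comm, ← EuclideanSpace.inner_eq_star_dotProduct, inner_self_eq_norm_sq_to_K,
      (hA.eigenvectorBasis.orthonormal.1 i)]
    simp
  have hS := isDensity_vecMulVec_star hv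
  refine ⟨_, hS, ?_⟩
  rw [frob, hS.1.isHermitian.eq, trace_mul_comm, mul_vecMulVec, trace_vecMulVec,
    hA.mulVec_eigenvectorBasis, dotProduct_comm, RCLike.real_smul_eq_coe_smul (K := ℂ),
    dotProduct_smul, hv, lamMax, dif_pos hA, ← hi]
  simp

end Matrix.IsHermitian

theorem frob_eq_sum {α : Type*} [Fintype α] (A B : Matrix α α ℂ) :
    frob A B = ∑ p, ∑ q, star (A q p) * B q p := by
  simp [frob, trace, mul_apply]

section PayoffOperator

variable {k m : ℕ} {R : Matrix (Fin k × Fin m) (Fin k × Fin m) ℂ}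

theorem payoffOp_add (T T' : Matrix (Fin m) (Fin m) ℂ) :
    payoffOp R (T + T') = payoffOp R T + payoffOp R T' := by
  ext a b
  simp [payoffOp, mul_add, Finset.sum_add_distrib]

theorem payoffOp_smul (c : ℝ) (T : Matrix (Fin m) (Fin m) ℂ) :
    payoffOp R (c • T) = c • payoffOp R T := by
  ext a b
  simp [payoffOp, Finset.smul_sum, mul_left_comm]

theorem Matrix.IsHermitian.payoffOp (hR : R.IsHermitian) {T : Matrix (Fin m) (Fin m) ℂ}
    (hT : T.IsHermitian) : (payoffOp R T).IsHermitian := by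
  refine IsHermitian.ext fun a b => ?_
  simp only [_root_.payoffOp, of_apply, star_sum, star_mul', hR.apply, hT.apply]
  exact Finset.sum_comm

theorem frob_kronecker_eq_frob_payoffOp (hR : R.IsHermitian) {S : Matrix (Fin k) (Fin k) ℂ}
    (hS : S.IsHermitian) (T : Matrix (Fin m) (Fin m) ℂ) :
    frob R (S ⊗ₖ T) = frob S (payoffOp R T) := by
  simp only [frob_eq_sum, Fintype.sum_prod_type, payoffOp, of_apply, kroneckerMap_apply,
    Finset.mul_sum, hR.apply, hS.apply]
  conv_rhs => rw [Finset.sum_comm]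
  refine Finset.sum_congr rfl fun a _ => ?_
  rw [Finset.sum_comm]
  exact Finset.sum_congr rfl fun b _ => Finset.sum_congr rfl fun c _ =>
    Finset.sum_congr rfl fun d _ => by ring

end PayoffOperator

section DensityProfiles

variable {N : ℕ} (n : Fin N → ℕ)

abbrev Profile : Type := ∀ i, Matrix (Fin (n i)) (Fin (n i)) ℂ

def densityProfiles : Set (Profile n) := {X | ∀ i, IsDensity (X i)}

theorem densityProfiles_eq_pi : densityProfiles n = Set.univ.pi fun _ => {M | IsDensity M} := by
  ext X
  simp [densityProfiles]

theorem convex_densityProfiles : Convex ℝ (densityProfiles n) := by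
  rw [densityProfiles_eq_pi]
  exact convex_pi fun _ _ => convex_setOf_isDensity

theorem isCompact_densityProfiles : IsCompact (densityProfiles n) := by
  rw [densityProfiles_eq_pi]
  exact isCompact_univ_pi fun _ => isCompact_setOf_isDensity

variable {n} in
theorem densityProfiles_nonempty (hn : ∀ i, 0 < n i) : (densityProfiles n).Nonempty := by
  have (i : Fin N) : Nonempty (Fin (n i)) := Fin.pos_iff_nonempty.mp (hn i)
  choose X hX using fun i => exists_isDensity (α := Fin (n i))
  exact ⟨X, hX⟩

end DensityProfiles

section Game

variable {N : ℕ} (G : SimpleGraph (Fin N)) [DecidableRel G.Adj] (n : Fin N → ℕ)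
  (R : ∀ i j : Fin N, Matrix (Fin (n i) × Fin (n j)) (Fin (n i) × Fin (n j)) ℂ)

theorem Phi_add (X Y : Profile n) (i : Fin N) :
    Phi G n R (X + Y) i = Phi G n R X i + Phi G n R Y i := by
  simp [Phi, payoffOp_add, Finset.sum_add_distrib]

theorem Phi_smul (c : ℝ) (X : Profile n) (i : Fin N) :
    Phi G n R (c • X) i = c • Phi G n R X i := by
  simp [Phi, payoffOp_smul, Finset.smul_sum]

def payoffPairing : Profile n →ₗ[ℝ] Profile n →ₗ[ℝ] ℝ :=
  LinearMap.mk₂ ℝ (fun X W => ∑ i, (frob (W i) (Phi G n R X i)).re)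
    (fun X Y W => by simp [Phi_add, frob, Matrix.mul_add, Finset.sum_add_distrib])
    (fun c X W => by simp [Phi_smul, frob, Finset.mul_sum])
    (fun X W W' => by simp [frob, Matrix.add_mul, Finset.sum_add_distrib])
    (fun c X W => by simp [frob, Finset.mul_sum])

variable {G n R}

theorem payoffPairing_apply (X W : Profile n) :
    payoffPairing G n R X W = ∑ i, (frob (W i) (Phi G n R X i)).re :=
  rfl

theorem Phi_isHermitian (hR : ∀ i j, G.Adj i j → (R i j).IsHermitian)
    {X : Profile n} (hX : ∀ i, (X i).IsHermitian) (i : Fin N) :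
    (Phi G n R X i).IsHermitian :=
  (conjTranspose_sum _ _).trans <| Finset.sum_congr rfl fun j hj =>
    (hR i j ((G.mem_neighborFinset i j).mp hj)).payoffOp (hX j)

theorem payoff_eq_re_frob_Phi (hR : ∀ i j, G.Adj i j → (R i j).IsHermitian)
    {X : Profile n} (hX : ∀ i, (X i).IsHermitian) (i : Fin N) :
    payoff G n R X i = (frob (X i) (Phi G n R X i)).re := by
  have hfrob_sum : frob (X i) (Phi G n R X i) =
      ∑ j ∈ G.neighborFinset i, frob (X i) (payoffOp (R i j) (X j)) := by
    simp [Phi, frob, Matrix.mul_sum, trace_sum]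
  rw [payoff, hfrob_sum]
  congr 1
  exact Finset.sum_congr rfl fun j hj =>
    frob_kronecker_eq_frob_payoffOp (hR i j ((G.mem_neighborFinset i j).mp hj)) (hX i) (X j)

theorem payoffPairing_self (hR : ∀ i j, G.Adj i j → (R i j).IsHermitian)
    {X : Profile n} (hX : ∀ i, (X i).IsHermitian) :
    payoffPairing G n R X X = ∑ i, payoff G n R X i := by
  simp [payoffPairing_apply, payoff_eq_re_frob_Phi hR hX]

end Game

/-- in a zero-sum semidefinite network game, the minimum of
`Σ_i λ_max(Φ_i(X))` over profiles of density matrices is attained and equals `0`;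
equivalently, the SDP minimizing `Σ_i w_i` subject to `Φ_i(X) ⪯ w_i I` over profiles of
density matrices `X` has optimal value `0`, attained at some feasible point. -/
theorem stmt11 {N : ℕ} (G : SimpleGraph (Fin N)) [DecidableRel G.Adj] (n : Fin N → ℕ)
    (hn : ∀ i, 0 < n i)
    (R : ∀ i j : Fin N, Matrix (Fin (n i) × Fin (n j)) (Fin (n i) × Fin (n j)) ℂ)
    (hR : ∀ i j, G.Adj i j → (R i j).IsHermitian)
    (hzs : ∀ X : ∀ i, Matrix (Fin (n i)) (Fin (n i)) ℂ,
      (∀ i, IsDensity (X i)) → ∑ i, payoff G n R X i = 0) :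
    IsLeast {r : ℝ | ∃ X : ∀ i, Matrix (Fin (n i)) (Fin (n i)) ℂ,
        (∀ i, IsDensity (X i)) ∧ r = ∑ i, lamMax (Phi G n R X i)} 0 ∧
    IsLeast {r : ℝ | ∃ (w : Fin N → ℝ) (X : ∀ i, Matrix (Fin (n i)) (Fin (n i)) ℂ),
        (∀ i, IsDensity (X i)) ∧
        (∀ i, ((w i : ℂ) • (1 : Matrix (Fin (n i)) (Fin (n i)) ℂ)
          - Phi G n R X i).PosSemidef) ∧
        r = ∑ i, w i} 0 := by
  have hherm (X) (hX : X ∈ densityProfiles n) i :=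
    Phi_isHermitian hR (fun j => (hX j).1.isHermitian) i
  have hself (X) (hX : X ∈ densityProfiles n) : payoffPairing G n R X X = 0 := by
    rw [payoffPairing_self hR fun i => (hX i).1.isHermitian, hzs X hX]
  have hlower (X) (hX : X ∈ densityProfiles n) (w : Fin N → ℝ)
      (hw : ∀ i, ((w i : ℂ) • 1 - Phi G n R X i).PosSemidef) : 0 ≤ ∑ i, w i :=
    calc 0 = payoffPairing G n R X X := (hself X hX).symm
      _ ≤ ∑ i, w i := by
        rw [payoffPairing_apply]
        exact Finset.sum_le_sum fun i _ => (hX i).re_frob_le (hw i)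
  have hfeas (X) (hX : X ∈ densityProfiles n) i :=
    (hherm X hX i).posSemidef_lamMax_smul_one_sub
  obtain ⟨Y, hY, hY_le⟩ := exists_forall_apply_le_zero_of_apply_self_eq_zero
    (convex_densityProfiles n) (isCompact_densityProfiles n) (densityProfiles_nonempty hn) _ hself
  have hval : ∑ i, lamMax (Phi G n R Y i) = 0 := by
    choose S hS hSY using fun i => (hherm Y hY i).exists_isDensity_re_frob_eq_lamMax (hn i)
    refine le_antisymm ?_ (hlower Y hY _ (hfeas Y hY))
    calc ∑ i, lamMax (Phi G n R Y i) = payoffPairing G n R Y S := by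
          simp [payoffPairing_apply, hSY]
      _ ≤ 0 := hY_le S hS
  refine ⟨⟨⟨Y, hY, hval.symm⟩, ?_⟩, ⟨⟨_, Y, hY, hfeas Y hY, hval.symm⟩, ?_⟩⟩
  · rintro _ ⟨X, hX, rfl⟩
    exact hlower X hX _ (hfeas X hX)
  · rintro _ ⟨w, X, hX, hw, rfl⟩
    exact hlower X hX w hw

end
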